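/- arXiv:2209.02041 — 2 statements merged into one kernel-verified Lean document; each statement's English description precedes it below -/
import Mathlib

section
/- Let (X,r) be a solution, k a positive integer, and x ∈ X. Suppose x lies in a 𝒢(X,r)-orbit of size m and in a 𝒢(X,r^{(k)})-orbit of size m'. Then m' is a multiple of the maximal divisor m_k of m which is coprime to k (i.e. the largest d with d | m and gcd(d,k) = 1 divides m'). -/
open Function

variable {X : Type*}

/-- The map `r(x,y) = (σ_x(y), τ_y(x))` built from two families of bijections. -/
def ybR (σ τ : X → Equiv.Perm X) : X × X → X × X :=
  fun p => (σ p.1 p.2, τ p.2 p.1)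

/-- Apply a map `X × X → X × X` to the first two coordinates of a triple (`r × id`). -/
def lmap (r : X × X → X × X) : X × X × X → X × X × X :=
  fun p => ((r (p.1, p.2.1)).1, ((r (p.1, p.2.1)).2, p.2.2))

/-- Apply a map `X × X → X × X` to the last two coordinates of a triple (`id × r`). -/
def rmap (r : X × X → X × X) : X × X × X → X × X × X :=
  fun p => (p.1, r p.2)

/-- A finite non-degenerate involutive set-theoretic solution of the Yang--Baxter
equation on a finite set `X` with `|X| > 1`. -/
structure YBSolution (X : Type*) [Fintype X] where
  σ : X → Equiv.Perm X
  τ : X → Equiv.Perm X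
  card_gt_one : 1 < Fintype.card X
  involutive : ∀ p : X × X, ybR σ τ (ybR σ τ p) = p
  braid : lmap (ybR σ τ) ∘ rmap (ybR σ τ) ∘ lmap (ybR σ τ)
        = rmap (ybR σ τ) ∘ lmap (ybR σ τ) ∘ rmap (ybR σ τ)

namespace YBSolution

variable [Fintype X]

/-- The diagonal map `T(x) = τ_x⁻¹(x)`. -/
def T (S : YBSolution X) (x : X) : X := (S.τ x).symm x

/-- The map `U(x) = σ_x⁻¹(x)`, the inverse of the diagonal map. -/
def U (S : YBSolution X) (x : X) : X := (S.σ x).symm x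

/-- The `k`-cabled sigma maps (also denoted `π_k`):
`σ^{(k)}_x = σ_x ∘ σ_{U(x)} ∘ ⋯ ∘ σ_{U^{k-1}(x)}`. -/
def sigmaCab (S : YBSolution X) : ℕ → X → X → X
  | 0, _ => id
  | k + 1, x => ⇑(S.σ x) ∘ S.sigmaCab k (S.U x)

/-- The composition `τ_{U^{k-1}(y)} ∘ ⋯ ∘ τ_{U(y)} ∘ τ_y`. -/
def tauChain (S : YBSolution X) : ℕ → X → X → X
  | 0, _ => id
  | k + 1, y => S.tauChain k (S.U y) ∘ ⇑(S.τ y)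

/-- The `k`-cabled tau maps:
`τ^{(k)}_y = T^{k-1} ∘ τ_{U^{k-1}(y)} ∘ ⋯ ∘ τ_{U(y)} ∘ τ_y ∘ T^{-(k-1)}`,
where `T^{-(k-1)} = U^{k-1}` since `U` is the inverse of `T`. -/
def tauCab (S : YBSolution X) (k : ℕ) (y : X) : X → X :=
  S.T^[k - 1] ∘ S.tauChain k y ∘ S.U^[k - 1]

/-- The `k`-cabled solution `r^{(k)}(x,y) = (σ^{(k)}_x(y), τ^{(k)}_y(x))`. -/
def rCab (S : YBSolution X) (k : ℕ) : X × X → X × X :=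
  fun p => (S.sigmaCab k p.1 p.2, S.tauCab k p.2 p.1)

/-- The permutation group `𝒢(X,r)`, generated by the `σ_x`. -/
def G (S : YBSolution X) : Subgroup (Equiv.Perm X) :=
  Subgroup.closure (Set.range S.σ)

/-- The permutation group `𝒢(X,r^{(k)})` of the `k`-cabled solution,
generated by the `σ^{(k)}_x`. -/
def Gcab (S : YBSolution X) (k : ℕ) : Subgroup (Equiv.Perm X) :=
  Subgroup.closure {g : Equiv.Perm X | ∃ x : X, ⇑g = S.sigmaCab k x}

/-- The orbit of `x` under the diagonal map `T`. -/
def Torbit (S : YBSolution X) (x : X) : Set X := {y | ∃ n : ℕ, S.T^[n] x = y}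

/-- The orbit of `x` under `𝒢(X,r)`. -/
def Gorbit (S : YBSolution X) (x : X) : Set X := {y | ∃ g ∈ S.G, g x = y}

/-- The orbit of `x` under `𝒢(X,r^{(k)})`. -/
def GcabOrbit (S : YBSolution X) (k : ℕ) (x : X) : Set X :=
  {y | ∃ g ∈ S.Gcab k, g x = y}

/-- A solution is indecomposable when `𝒢(X,r)` acts transitively on `X`. -/
def IsIndecomposable (S : YBSolution X) : Prop := ∀ x y : X, ∃ g ∈ S.G, g x = y

end YBSolution

/-!
The structure group of `(X, r)` is realised inside `ℤ^X ⋊ Sym(X)` as the subgroup `H` generated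
by the `(e_x, σ_x)`, and its translation part `vec : H → ℤ^X` is a bijection. It is onto because
multiplying by a generator or its inverse moves any single coordinate by `±1`. It is one-to-one
because every element of `H` is a left fraction `Q⁻¹ P` of positive words, and a positive word is
determined by its translation part: by the exchange relation `x y = σ_x(y) τ_y(x)`, every letter
occurring in a positive word can be moved to its front. The subgroup `H_k` generated by the cabled
generators `(k e_x, σ^{(k)}_x)` maps onto `kℤ^X`, hence is exactly the preimage of `kℤ^X`, so that
`H / H_k ≃ (ℤ/k)^X`. Projecting to `Sym(X)`, the index `[𝒢 : 𝒢_k]` divides `k^|X|`, and comparing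
stabilisers gives `m' · [𝒢 : 𝒢_k] = m · [Stab_𝒢(x) : Stab_{𝒢_k}(x)]`.
-/

section Wreath

variable (X) in
abbrev permCoordAction (A : Type*) [AddMonoid A] : DistribMulAction (Equiv.Perm X) (X → A) where
  __ := arrowAction
  smul_zero _ := rfl
  smul_add _ _ _ := rfl

attribute [local instance] permCoordAction

lemma perm_smul_apply {A : Type*} [AddMonoid A] (g : Equiv.Perm X) (v : X → A) (z : X) :
    (g • v) z = v (g⁻¹ z) := rfl

lemma perm_smul_single [DecidableEq X] (g : Equiv.Perm X) (y : X) (a : ℤ) :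
    g • (Pi.single y a : X → ℤ) = Pi.single (g y) a := by
  funext z
  simp [perm_smul_apply, Pi.single_apply, Equiv.symm_apply_eq]

lemma AddSubgroup.closure_range_single_one [Finite X] [DecidableEq X] :
    AddSubgroup.closure (Set.range fun y : X => (Pi.single y 1 : X → ℤ)) = ⊤ := by
  rw [← Submodule.span_int_eq_addSubgroupClosure, Submodule.toAddSubgroup_eq_top,
    ← (Pi.basisFun ℤ X).span_eq]
  congr 1
  ext
  simp

noncomputable def reduceMod (X : Type*) (k : ℕ) : (X → ℤ) →+ (X → ZMod k) :=
  (Int.castAddHom (ZMod k)).compLeft X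

lemma reduceMod_perm_smul (k : ℕ) (g : Equiv.Perm X) (v : X → ℤ) :
    reduceMod X k (g • v) = g • reduceMod X k v := rfl

lemma reduceMod_surjective (k : ℕ) : Surjective (reduceMod X k) :=
  (ZMod.intCast_surjective (n := k)).comp_left

noncomputable def permCoords : Equiv.Perm X →* MulAut (Multiplicative (X → ℤ)) where
  toFun g := AddEquiv.toMultiplicative (DistribMulAction.toAddEquiv (X → ℤ) g)
  map_one' := MulEquiv.ext fun _ => rfl
  map_mul' _ _ := MulEquiv.ext fun _ => rfl

/-- The wreath product `ℤ ≀ Sym(X) = ℤ^X ⋊ Sym(X)`, where `(v, g) * (w, h) = (v + g • w, g h)`. -/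
abbrev ZWreath (X : Type*) := Multiplicative (X → ℤ) ⋊[permCoords] Equiv.Perm X

namespace ZWreath

def vec (h : ZWreath X) : X → ℤ := Multiplicative.toAdd h.left

@[simp] lemma vec_one : vec (1 : ZWreath X) = 0 := rfl

lemma vec_mul (a b : ZWreath X) : vec (a * b) = vec a + a.right • vec b := rfl

lemma vec_inv (a : ZWreath X) : vec a⁻¹ = -(a.right⁻¹ • vec a) := rfl

lemma vec_inv_mul (a b : ZWreath X) : vec (a⁻¹ * b) = a.right⁻¹ • (vec b - vec a) := by
  rw [vec_mul, vec_inv, smul_sub, SemidirectProduct.inv_right]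
  abel

lemma ext {a b : ZWreath X} (hv : vec a = vec b) (hr : a.right = b.right) : a = b :=
  SemidirectProduct.ext (congrArg Multiplicative.ofAdd hv) hr

lemma exists_mem_vec_eq_smul [Finite X] [DecidableEq X] (B : Subgroup (ZWreath X)) (c : ℤ)
    (add_step : ∀ h ∈ B, ∀ y, ∃ h' ∈ B, vec h' = Pi.single y c + vec h)
    (sub_step : ∀ h ∈ B, ∀ y, ∃ h' ∈ B, vec h' = -Pi.single y c + vec h) (v : X → ℤ) :
    ∃ h ∈ B, vec h = c • v := by
  have hv : v ∈ AddSubgroup.closure (Set.range fun y : X => (Pi.single y 1 : X → ℤ)) := by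
    rw [AddSubgroup.closure_range_single_one]
    trivial
  induction hv using AddSubgroup.closure_induction_left with
  | zero => exact ⟨1, one_mem _, by simp⟩
  | add_left _ hy _ _ ih =>
    obtain ⟨y, rfl⟩ := hy
    obtain ⟨h, hB, hh⟩ := ih
    obtain ⟨h', hB', hh'⟩ := add_step h hB y
    exact ⟨h', hB', by rw [hh', hh, smul_add, ← Pi.single_smul, smul_eq_mul, mul_one]⟩
  | neg_add_cancel _ hy _ _ ih =>
    obtain ⟨y, rfl⟩ := hy
    obtain ⟨h, hB, hh⟩ := ih
    obtain ⟨h', hB', hh'⟩ := sub_step h hB y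
    exact ⟨h', hB', by rw [hh', hh, smul_add, smul_neg, ← Pi.single_smul, smul_eq_mul, mul_one]⟩

end ZWreath

namespace YBSolution

open ZWreath

variable [Fintype X] (S : YBSolution X)

lemma σ_σ_τ (x y : X) : S.σ (S.σ x y) (S.τ y x) = x :=
  congrArg Prod.fst (S.involutive (x, y))

lemma τ_τ_σ (x y : X) : S.τ (S.τ y x) (S.σ x y) = y :=
  congrArg Prod.snd (S.involutive (x, y))

lemma σ_σ_mul_σ_τ (x y : X) : S.σ (S.σ x y) * S.σ (S.τ y x) = S.σ x * S.σ y := by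
  ext z
  exact congrArg Prod.fst (congrFun S.braid (x, y, z))

lemma σ_U (x : X) : S.σ x (S.U x) = x := by simp [U]

lemma U_T (x : X) : S.U (S.T x) = x := by
  have hT : S.τ x (S.T x) = x := Equiv.apply_symm_apply _ _
  have h := S.τ_τ_σ (S.T x) x
  rw [hT] at h
  rw [U, Equiv.symm_apply_eq]
  exact (S.τ x).injective (hT.trans h.symm)

lemma U_surjective : Surjective S.U := fun x => ⟨S.T x, S.U_T x⟩

def sigmaCabPerm (S : YBSolution X) : ℕ → X → Equiv.Perm X
  | 0, _ => 1
  | k + 1, x => S.σ x * S.sigmaCabPerm k (S.U x)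

lemma coe_sigmaCabPerm (k : ℕ) (x : X) : ⇑(S.sigmaCabPerm k x) = S.sigmaCab k x := by
  induction k generalizing x with
  | zero => rfl
  | succ k ih => simp [sigmaCabPerm, sigmaCab, ih]

lemma sigmaCabPerm_inv_self (k : ℕ) (x : X) : (S.sigmaCabPerm k x)⁻¹ x = S.U^[k] x := by
  rw [Equiv.Perm.inv_eq_iff_eq]
  induction k generalizing x with
  | zero => rfl
  | succ k ih => rw [iterate_succ_apply, sigmaCabPerm, Equiv.Perm.mul_apply, ← ih, σ_U]

section StructGroup

variable [DecidableEq X]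

noncomputable def gen (x : X) : ZWreath X := ⟨.ofAdd (Pi.single x 1), S.σ x⟩

noncomputable def cabGen (k : ℕ) (x : X) : ZWreath X :=
  ⟨.ofAdd (Pi.single x (k : ℤ)), S.sigmaCabPerm k x⟩

@[simp] lemma vec_gen (x : X) : vec (S.gen x) = Pi.single x 1 := rfl

@[simp] lemma gen_right (x : X) : (S.gen x).right = S.σ x := rfl

@[simp] lemma vec_cabGen (k : ℕ) (x : X) : vec (S.cabGen k x) = Pi.single x (k : ℤ) := rfl

@[simp] lemma cabGen_right (k : ℕ) (x : X) : (S.cabGen k x).right = S.sigmaCabPerm k x := rfl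

lemma cabGen_zero (x : X) : S.cabGen 0 x = 1 :=
  ZWreath.ext (by simp only [vec_cabGen, Nat.cast_zero, Pi.single_zero, vec_one]) rfl

lemma cabGen_one (x : X) : S.cabGen 1 x = S.gen x :=
  ZWreath.ext (by simp only [vec_cabGen, vec_gen, Nat.cast_one]) (mul_one _)

lemma cabGen_succ (k : ℕ) (x : X) : S.cabGen (k + 1) x = S.gen x * S.cabGen k (S.U x) := by
  refine ZWreath.ext ?_ rfl
  simp only [vec_cabGen, vec_mul, vec_gen, gen_right, perm_smul_single, σ_U, ← Pi.single_add]
  push_cast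
  rw [add_comm]

lemma gen_mul_gen (x y : X) : S.gen x * S.gen y = S.gen (S.σ x y) * S.gen (S.τ y x) := by
  refine ZWreath.ext ?_ (S.σ_σ_mul_σ_τ x y).symm
  simp only [vec_mul, vec_gen, gen_right, perm_smul_single, σ_σ_τ]
  exact add_comm _ _

noncomputable def structGroup : Subgroup (ZWreath X) := Subgroup.closure (Set.range S.gen)

noncomputable def cabStructGroup (k : ℕ) : Subgroup (ZWreath X) :=
  Subgroup.closure (Set.range (S.cabGen k))

lemma cabStructGroup_one : S.cabStructGroup 1 = S.structGroup := by
  simp only [cabStructGroup, structGroup, funext S.cabGen_one]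

lemma cabStructGroup_le (k : ℕ) : S.cabStructGroup k ≤ S.structGroup := by
  rw [cabStructGroup, Subgroup.closure_le]
  rintro _ ⟨x, rfl⟩
  induction k generalizing x with
  | zero => exact S.cabGen_zero x ▸ one_mem _
  | succ k ih =>
    rw [cabGen_succ]
    exact mul_mem (Subgroup.subset_closure ⟨x, rfl⟩) (ih _)

lemma map_right_structGroup : S.structGroup.map SemidirectProduct.rightHom = S.G := by
  rw [structGroup, MonoidHom.map_closure, G, ← Set.range_comp]
  rfl

lemma map_right_cabStructGroup (k : ℕ) :
    (S.cabStructGroup k).map SemidirectProduct.rightHom = S.Gcab k := by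
  rw [cabStructGroup, MonoidHom.map_closure, Gcab, ← Set.range_comp]
  congr 1
  ext g
  simp [← DFunLike.coe_fn_eq, coe_sigmaCabPerm, eq_comm]

noncomputable def wprod (l : List X) : ZWreath X := (l.map S.gen).prod

@[simp] lemma wprod_nil : S.wprod [] = 1 := rfl

@[simp] lemma wprod_cons (x : X) (l : List X) : S.wprod (x :: l) = S.gen x * S.wprod l := rfl

lemma vec_wprod_nonneg (l : List X) (z : X) : 0 ≤ vec (S.wprod l) z := by
  induction l generalizing z with
  | nil => exact le_rfl
  | cons x l ih =>
    rw [wprod_cons, vec_mul, Pi.add_apply, perm_smul_apply, vec_gen]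
    exact add_nonneg ((Pi.single_nonneg.2 zero_le_one : (0 : X → ℤ) ≤ Pi.single x 1) z) (ih _)

lemma one_le_vec_wprod_cons (y : X) (l : List X) : 1 ≤ vec (S.wprod (y :: l)) y := by
  rw [wprod_cons, vec_mul, Pi.add_apply, perm_smul_apply]
  simpa using S.vec_wprod_nonneg l _

lemma exists_wprod_eq_gen_mul {l : List X} {y : X} (hy : 1 ≤ vec (S.wprod l) y) :
    ∃ l', S.wprod l = S.gen y * S.wprod l' := by
  induction l generalizing y with
  | nil => simp at hy
  | cons x l ih =>
    by_cases hxy : x = y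
    · exact ⟨l, hxy ▸ rfl⟩
    set z := (S.σ x).symm y
    rw [wprod_cons, vec_mul, Pi.add_apply, perm_smul_apply] at hy
    obtain ⟨l', hl'⟩ := ih (y := z) (by simpa [Pi.single_apply, Ne.symm hxy] using hy)
    refine ⟨S.τ z x :: l', ?_⟩
    rw [wprod_cons, hl', ← mul_assoc, gen_mul_gen, Equiv.apply_symm_apply, wprod_cons, mul_assoc]

lemma wprod_eq_of_vec_eq {l₁ l₂ : List X} (h : vec (S.wprod l₁) = vec (S.wprod l₂)) :
    S.wprod l₁ = S.wprod l₂ := by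
  induction l₁ generalizing l₂ with
  | nil =>
    cases l₂ with
    | nil => rfl
    | cons y l =>
      have h1 := S.one_le_vec_wprod_cons y l
      rw [← h] at h1
      simp at h1
  | cons x l ih =>
    obtain ⟨l', hl'⟩ := S.exists_wprod_eq_gen_mul (h ▸ S.one_le_vec_wprod_cons x l)
    rw [hl', wprod_cons, vec_mul, vec_mul] at h
    rw [hl', wprod_cons, ih (MulAction.injective _ (add_left_cancel h))]

lemma gen_mul_inv_gen (x y : X) :
    S.gen x * (S.gen y)⁻¹ = (S.gen ((S.τ x).symm y))⁻¹ * S.gen (S.σ ((S.τ x).symm y) x) := by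
  have h := S.gen_mul_gen ((S.τ x).symm y) x
  rw [Equiv.apply_symm_apply] at h
  rw [mul_inv_eq_iff_eq_mul, mul_assoc, ← h, inv_mul_cancel_left]

lemma exists_gen_mul_inv_wprod (x : X) (q : List X) :
    ∃ q' b, S.gen x * (S.wprod q)⁻¹ = (S.wprod q')⁻¹ * S.gen b := by
  induction q with
  | nil => exact ⟨[], x, by simp⟩
  | cons y q ih =>
    obtain ⟨q', b, h⟩ := ih
    refine ⟨(S.τ b).symm y :: q', S.σ ((S.τ b).symm y) b, ?_⟩
    rw [wprod_cons, mul_inv_rev, ← mul_assoc, h, mul_assoc, gen_mul_inv_gen, wprod_cons,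
      mul_inv_rev, mul_assoc]

lemma exists_eq_inv_wprod_mul_wprod {h : ZWreath X} (hh : h ∈ S.structGroup) :
    ∃ p q, h = (S.wprod q)⁻¹ * S.wprod p := by
  induction hh using Subgroup.closure_induction_left with
  | one => exact ⟨[], [], by simp⟩
  | mul_left _ hx _ _ ih =>
    obtain ⟨x, rfl⟩ := hx
    obtain ⟨p, q, rfl⟩ := ih
    obtain ⟨q', b, hq'⟩ := S.exists_gen_mul_inv_wprod x q
    exact ⟨b :: p, q', by rw [← mul_assoc, hq', wprod_cons, mul_assoc]⟩
  | inv_mul_cancel _ hx _ _ ih =>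
    obtain ⟨x, rfl⟩ := hx
    obtain ⟨p, q, rfl⟩ := ih
    exact ⟨p, q ++ [x], by simp [wprod, mul_assoc]⟩

lemma injOn_vec : Set.InjOn vec (S.structGroup : Set (ZWreath X)) := by
  intro h₁ hh₁ h₂ hh₂ hv
  obtain ⟨p, q, hpq⟩ := S.exists_eq_inv_wprod_mul_wprod (mul_mem (inv_mem hh₁) hh₂)
  have hPQ : vec (S.wprod p) = vec (S.wprod q) := by
    have h0 := congrArg vec hpq
    rwa [vec_inv_mul, vec_inv_mul, hv, sub_self, smul_zero, eq_comm, smul_eq_zero_iff_eq,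
      sub_eq_zero] at h0
  rwa [S.wprod_eq_of_vec_eq hPQ, inv_mul_cancel, inv_mul_eq_one] at hpq

lemma exists_mem_cabStructGroup_vec_eq (k : ℕ) (v : X → ℤ) :
    ∃ h ∈ S.cabStructGroup k, vec h = (k : ℤ) • v := by
  refine exists_mem_vec_eq_smul _ _ (fun h hh y => ?_) (fun h hh y => ?_) v
  · refine ⟨h * S.cabGen k (h.right⁻¹ y), mul_mem hh (Subgroup.subset_closure ⟨_, rfl⟩), ?_⟩
    rw [vec_mul, vec_cabGen, perm_smul_single, Equiv.Perm.coe_inv, Equiv.apply_symm_apply,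
      add_comm]
  · obtain ⟨w, hw⟩ := (S.U_surjective.iterate k) (h.right⁻¹ y)
    refine ⟨h * (S.cabGen k w)⁻¹, mul_mem hh (inv_mem (Subgroup.subset_closure ⟨_, rfl⟩)), ?_⟩
    rw [vec_mul, vec_inv, vec_cabGen, cabGen_right, perm_smul_single, sigmaCabPerm_inv_self, hw,
      smul_neg, perm_smul_single, Equiv.Perm.coe_inv, Equiv.apply_symm_apply, add_comm]

variable (k : ℕ)

lemma reduceMod_vec_eq_zero {h : ZWreath X} (hh : h ∈ S.cabStructGroup k) :
    reduceMod X k (vec h) = 0 := by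
  induction hh using Subgroup.closure_induction with
  | mem _ hx =>
    obtain ⟨x, rfl⟩ := hx
    funext z
    simp [reduceMod, Pi.single_apply]
  | one => exact map_zero _
  | mul a b _ _ ha hb => rw [vec_mul, map_add, reduceMod_perm_smul, ha, hb, smul_zero, add_zero]
  | inv a _ ha => rw [vec_inv, map_neg, reduceMod_perm_smul, ha, smul_zero, neg_zero]

lemma mem_cabStructGroup_iff {h : ZWreath X} (hh : h ∈ S.structGroup) :
    h ∈ S.cabStructGroup k ↔ reduceMod X k (vec h) = 0 := by
  refine ⟨S.reduceMod_vec_eq_zero k, fun h0 => ?_⟩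
  obtain ⟨a, ha, hva⟩ := S.exists_mem_cabStructGroup_vec_eq k (fun z => vec h z / k)
  have hdvd (z : X) : (k : ℤ) ∣ vec h z :=
    (ZMod.intCast_zmod_eq_zero_iff_dvd _ _).1 (congrFun h0 z)
  have hah : a = h := S.injOn_vec (S.cabStructGroup_le k ha) hh <| by
    rw [hva]
    funext z
    exact Int.mul_ediv_cancel' (hdvd z)
  exact hah ▸ ha

lemma inv_mul_mem_cabStructGroup_iff {h₁ h₂ : ZWreath X} (hh₁ : h₁ ∈ S.structGroup)
    (hh₂ : h₂ ∈ S.structGroup) :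
    h₁⁻¹ * h₂ ∈ S.cabStructGroup k ↔ reduceMod X k (vec h₁) = reduceMod X k (vec h₂) := by
  rw [S.mem_cabStructGroup_iff k (mul_mem (inv_mem hh₁) hh₂), vec_inv_mul, reduceMod_perm_smul,
    smul_eq_zero_iff_eq, map_sub, sub_eq_zero, eq_comm]

lemma relIndex_cabStructGroup :
    (S.cabStructGroup k).relIndex S.structGroup = k ^ Fintype.card X := by
  let f (h : S.structGroup) : X → ZMod k := reduceMod X k (vec h)
  have hf : Surjective f := by
    intro w
    obtain ⟨v, rfl⟩ := reduceMod_surjective k w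
    obtain ⟨h, hh, hv⟩ := S.exists_mem_cabStructGroup_vec_eq 1 v
    rw [cabStructGroup_one] at hh
    exact ⟨⟨h, hh⟩, by simp [f, hv]⟩
  have hrel (a b : S.structGroup) :
      QuotientGroup.leftRel ((S.cabStructGroup k).subgroupOf S.structGroup) a b ↔
        Setoid.ker f a b := by
    rw [QuotientGroup.leftRel_apply, Subgroup.mem_subgroupOf, Subgroup.coe_mul, Subgroup.coe_inv,
      S.inv_mul_mem_cabStructGroup_iff k a.2 b.2, Setoid.ker_def]
  refine (Nat.card_congr ((Quotient.congrRight hrel).trans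
    (Setoid.quotientKerEquivOfSurjective f hf))).trans ?_
  rw [Nat.card_fun, Nat.card_zmod, Nat.card_eq_fintype_card]

end StructGroup

lemma Gcab_le_G (k : ℕ) : S.Gcab k ≤ S.G := by
  classical
  rw [← map_right_cabStructGroup, ← map_right_structGroup]
  exact Subgroup.map_mono (S.cabStructGroup_le k)

lemma relIndex_Gcab_dvd (k : ℕ) : (S.Gcab k).relIndex S.G ∣ k ^ Fintype.card X := by
  classical
  rw [← map_right_structGroup, ← Subgroup.relIndex_comap, ← S.relIndex_cabStructGroup k]
  exact Subgroup.relIndex_dvd_of_le_left _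
    (S.map_right_cabStructGroup k ▸ Subgroup.le_comap_map _ _)

end YBSolution

end Wreath

lemma MulAction.dvd_ncard_orbit_of_coprime_relIndex {G α : Type*} [Group G] [MulAction G α]
    {A B : Subgroup G} (hBA : B ≤ A) (x : α) {d : ℕ} (hdA : d ∣ (orbit A x).ncard)
    (hd : d.Coprime (B.relIndex A)) : d ∣ (orbit B x).ncard := by
  have hstab (C : Subgroup G) : (orbit C x).ncard = (stabilizer G x).relIndex C :=
    (index_stabilizer C x).symm
  have hB := Subgroup.relIndex_inf_mul_relIndex (stabilizer G x) B A
  have hA := Subgroup.relIndex_inf_mul_relIndex B (stabilizer G x) A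
  rw [inf_of_le_left hBA] at hB
  have key : (orbit B x).ncard * B.relIndex A =
      B.relIndex (stabilizer G x ⊓ A) * (orbit A x).ncard := by
    rw [hstab, hstab, hB, hA, inf_comm]
  exact hd.dvd_of_dvd_mul_right (key ▸ dvd_mul_of_dvd_right hdA _)

theorem cabled_orbit_size_general [Fintype X] (S : YBSolution X) (k : ℕ) (x : X)
    (m m' : ℕ) (hm : (S.Gorbit x).ncard = m) (hm' : (S.GcabOrbit k x).ncard = m')
    (d : ℕ) (hdm : d ∣ m) (hdk : Nat.Coprime d k) : d ∣ m' := by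
  have horbit (A : Subgroup (Equiv.Perm X)) : MulAction.orbit A x = {y | ∃ g ∈ A, g x = y} := by
    ext y
    simp [MulAction.mem_orbit_iff, Subgroup.smul_def]
  subst hm hm'
  rw [YBSolution.GcabOrbit, ← horbit]
  rw [YBSolution.Gorbit, ← horbit] at hdm
  exact MulAction.dvd_ncard_orbit_of_coprime_relIndex (S.Gcab_le_G k) x hdm
    (Nat.Coprime.coprime_dvd_right (S.relIndex_Gcab_dvd k) (hdk.pow_right _))

/-- if `x` lies in a `𝒢(X,r)`-orbit of size `m` and in a
`𝒢(X,r^{(k)})`-orbit of size `m'`, then `m'` is a multiple of the maximal divisor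
of `m` coprime to `k`; equivalently, every divisor `d` of `m` with `gcd(d,k) = 1`
divides `m'`. -/
theorem cabled_orbit_size [Fintype X] (S : YBSolution X) (k : ℕ) (hk : 0 < k) (x : X)
    (m m' : ℕ) (hm : (S.Gorbit x).ncard = m) (hm' : (S.GcabOrbit k x).ncard = m')
    (d : ℕ) (hdm : d ∣ m) (hdk : Nat.Coprime d k) : d ∣ m' :=
  cabled_orbit_size_general S k x m m' hm hm' d hdm hdk
end

section
/- Let (X,r) be a solution with Dehornoy class m. Then the order of the diagonal map T in the symmetric group of X divides m; in particular T^m = Id. -/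
open Function

variable {X : Type*}

theorem Function.dvd_of_iterate_eq_id {α : Type*} {f : α → α} {m n : ℕ} (hm : f^[m] = id)
    (hn : IsLeast {n : ℕ | 0 < n ∧ f^[n] = id} n) : n ∣ m := by
  have hmod : f^[m % n] = id :=
    funext fun x => IsPeriodicPt.mod (congrFun hm x) (congrFun hn.1.2 x)
  by_contra h
  exact (Nat.mod_lt m hn.1.1).not_ge
    (hn.2 ⟨Nat.pos_of_ne_zero (mt Nat.dvd_of_mod_eq_zero h), hmod⟩)

namespace YBSolution

variable [Fintype X] (S : YBSolution X)

/- Since `σ_x (U x) = x`, involutivity at `(x, U x)` reads `σ_x (τ_{U x} x) = x`,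
that is `τ_{U x} x = U x`. -/
theorem leftInverse_T_U : LeftInverse S.T S.U := by
  intro x
  have h := congrArg Prod.fst (S.involutive (x, S.U x))
  simp only [ybR, U, Equiv.apply_symm_apply] at h
  rw [T, Equiv.symm_apply_eq]
  exact (Equiv.symm_apply_eq _).mpr h.symm

theorem sigmaCab_iterate_U (k : ℕ) (x : X) : S.sigmaCab k x (S.U^[k] x) = x := by
  induction k generalizing x with
  | zero => rfl
  | succ k ih =>
    rw [iterate_succ_apply, sigmaCab, comp_apply, ih, U, Equiv.apply_symm_apply]

theorem iterate_T_eq_id_of_sigmaCab_eq_id {k : ℕ} (h : ∀ x, S.sigmaCab k x = id) :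
    S.T^[k] = id := by
  funext x
  have hU : S.U^[k] x = x := by simpa only [h x, id] using S.sigmaCab_iterate_U k x
  calc S.T^[k] x = S.T^[k] (S.U^[k] x) := by rw [hU]
    _ = x := S.leftInverse_T_U.iterate k x

end YBSolution

/-- the order of the diagonal map `T` divides the Dehornoy class
`m`; in particular `T^m = Id`. -/
theorem order_T_dvd_dehornoy_class [Fintype X] (S : YBSolution X) (m : ℕ)
    (hm : IsLeast {m : ℕ | 0 < m ∧ ∀ x : X, S.sigmaCab m x = id} m) :
    S.T^[m] = id ∧ ∀ n : ℕ, IsLeast {n : ℕ | 0 < n ∧ S.T^[n] = id} n → n ∣ m := by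
  have hTm := S.iterate_T_eq_id_of_sigmaCab_eq_id hm.1.2
  exact ⟨hTm, fun n hn => Function.dvd_of_iterate_eq_id hTm hn⟩
end
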